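/- For fixed data size D > 0, bandwidth B > 0, channel gain h > 0, and noise power σ² > 0, the function T(P) = D / (B · log₂(1 + P·h/σ²)) is convex on (0, ∞). -/
import Mathlib

open Real Set

/-- logb 2 (1 + P h / σ2) is concave on Ioi 0. -/
lemma logb_affine_concave (h σ2 : ℝ) (hh : 0 < h) (hσ : 0 < σ2) :
    ConcaveOn ℝ (Ioi (0 : ℝ)) (fun P => Real.logb 2 (1 + P * h / σ2)) := by
  have hlog : ConcaveOn ℝ (Ioi (0 : ℝ)) Real.log := strictConcaveOn_log_Ioi.concaveOn
  have key : ConcaveOn ℝ (Ioi (0 : ℝ)) (fun P => Real.log (1 + P * h / σ2)) := by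
    constructor
    · exact convex_Ioi 0
    · intro x hx y hy a b ha hb hab
      have hx0 : (0:ℝ) < x := hx
      have hy0 : (0:ℝ) < y := hy
      have hx1 : (0:ℝ) < 1 + x * h / σ2 := by positivity
      have hy1 : (0:ℝ) < 1 + y * h / σ2 := by positivity
      have := hlog.2 (mem_Ioi.mpr hx1) (mem_Ioi.mpr hy1) ha hb hab
      have harg : 1 + (a • x + b • y) * h / σ2
          = a • (1 + x * h / σ2) + b • (1 + y * h / σ2) := by
        simp only [smul_eq_mul]; field_simp; ring_nf; nlinarith [hab]
      show a • Real.log (1 + x * h / σ2) + b • Real.log (1 + y * h / σ2)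
          ≤ Real.log (1 + (a • x + b • y) * h / σ2)
      rw [harg]; exact this
  have : ConcaveOn ℝ (Ioi (0 : ℝ))
      (fun P => (Real.log 2)⁻¹ • Real.log (1 + P * h / σ2)) :=
    key.smul (by positivity) 
  convert this using 2 with P
  rw [Real.logb, div_eq_inv_mul, smul_eq_mul]

/-- For fixed D, B, h, σ² > 0, T(P) = D / (B · log₂(1 + P·h/σ²)) is convex on (0, ∞). -/
theorem uplink_time_convexOn
    (D B h σ2 : ℝ) (hD : 0 < D) (hB : 0 < B) (hh : 0 < h) (hσ : 0 < σ2) :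
    ConvexOn ℝ (Set.Ioi (0 : ℝ))
      (fun P : ℝ => D / (B * Real.logb 2 (1 + P * h / σ2))) := by
  set f : ℝ → ℝ := fun P => Real.logb 2 (1 + P * h / σ2) with hf
  have hconc := logb_affine_concave h σ2 hh hσ
  have hfpos : ∀ x ∈ Ioi (0:ℝ), 0 < f x := by
    intro x hx
    apply Real.logb_pos one_lt_two
    have hx0 : (0:ℝ) < x := hx
    have : 0 < x * h / σ2 := by positivity
    linarith
  constructor
  · exact convex_Ioi 0
  · intro x hx y hy a b ha hb hab
    have hu := hfpos x hx
    have hv := hfpos y hy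
    have hz : x ∈ Ioi (0:ℝ) := hx
    have hmid : a • x + b • y ∈ Ioi (0:ℝ) := (convex_Ioi 0) hx hy ha hb hab
    have hw := hfpos _ hmid
    have hconcIneq : a • f x + b • f y ≤ f (a • x + b • y) :=
      hconc.2 hx hy ha hb hab
    have hcomb : 0 < a • f x + b • f y := lt_of_lt_of_le (by
      rcases eq_or_lt_of_le ha with h0 | h0
      · have hb1 : b = 1 := by linarith
        simpa [← h0, hb1] using hv
      · have : 0 < a • f x := by simpa [smul_eq_mul] using mul_pos h0 hu
        have : 0 ≤ b • f y := by
          simp only [smul_eq_mul]; positivity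
        nlinarith [mul_pos h0 hu]) le_rfl
    -- inverse is antitone and convex on positives
    have step1 : D / (B * f (a • x + b • y)) ≤ D / (B * (a • f x + b • f y)) := by
      apply div_le_div_of_nonneg_left hD.le (by positivity)
      have := mul_le_mul_of_nonneg_left hconcIneq hB.le
      linarith
    have step2 : D / (B * (a • f x + b • f y))
        ≤ a • (D / (B * f x)) + b • (D / (B * f y)) := by
      simp only [smul_eq_mul] at *
      rw [← mul_div_assoc, ← mul_div_assoc,
        div_add_div _ _ (by positivity : B * f x ≠ 0) (by positivity : B * f y ≠ 0),
        div_le_div_iff₀ (by positivity) (by positivity)]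
      have key : f x * f y ≤ (a * f y + b * f x) * (a * f x + b * f y) := by
        have hb' : b = 1 - a := by linarith
        rw [hb']
        nlinarith [mul_nonneg (mul_nonneg ha (by linarith : (0:ℝ) ≤ 1 - a))
          (sq_nonneg (f x - f y))]
      nlinarith [mul_le_mul_of_nonneg_left key (by positivity : (0:ℝ) ≤ D * B * B)]
    calc D / (B * f (a • x + b • y)) ≤ D / (B * (a • f x + b • f y)) := step1
      _ ≤ a • (D / (B * f x)) + b • (D / (B * f y)) := step2
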